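/- arXiv:2006.01109 — 2 statements merged into one kernel-verified Lean document; each statement's English description precedes it below -/
import Mathlib

section
/- Let z_n : [0,T] × Ω → ℝ^m converge ε_n-pathwise-uniformly to z (i.e., ε_n → 0 and there is an a.s.-finite random variable M_ω such that P(sup_{s∈[0,T]} ‖z_n(s) − z(s)‖ > ε_n M_ω) → 0), and suppose each coordinate supremum process z_j^*(T) = sup_{s∈[0,T]} z_j(s) satisfies P(z_j^*(T) = 0) = 0. Then P(∃ s ∈ [0,T], z_n(s) ∉ O) → P(∃ s ∈ [0,T], z(s) ∉ O), where O is the non-positive orthant of ℝ^m. -/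
open MeasureTheory Set Filter
open scoped ENNReal

lemma coord_abs_le_norm {m : ℕ} (x : EuclideanSpace ℝ (Fin m)) (j : Fin m) : |x j| ≤ ‖x‖ := by
  rw [EuclideanSpace.norm_eq]
  calc |x j| = Real.sqrt (‖x j‖ ^ 2) := by
        rw [Real.sqrt_sq_eq_abs, Real.norm_eq_abs, abs_abs]
    _ ≤ Real.sqrt (∑ i, ‖x i‖ ^ 2) :=
        Real.sqrt_le_sqrt (Finset.single_le_sum (f := fun i => ‖x i‖ ^ 2)
          (fun i _ => sq_nonneg _) (Finset.mem_univ j))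

lemma meas_sup_aux {Ω : Type*} [MeasurableSpace Ω] {T : ℝ} (hT : 0 ≤ T)
    (f : ℝ → Ω → ℝ) (hc : ∀ ω, Continuous fun s => f s ω)
    (hm : ∀ s, Measurable fun ω => f s ω) :
    Measurable fun ω => ⨆ s : Set.Icc (0:ℝ) T, f s ω := by
  haveI : Nonempty (Set.Icc (0:ℝ) T) := ⟨⟨0, le_refl 0, hT⟩⟩
  set D : ℕ → Set.Icc (0:ℝ) T := TopologicalSpace.denseSeq (Set.Icc (0:ℝ) T) with hD
  have hdense : DenseRange D := TopologicalSpace.denseRange_denseSeq _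
  have key : ∀ ω, (⨆ s : Set.Icc (0:ℝ) T, f s ω) = ⨆ n, f (D n) ω := by
    intro ω
    have hg : Continuous fun s : Set.Icc (0:ℝ) T => f s ω :=
      (hc ω).comp continuous_subtype_val
    have hB : BddAbove (Set.range fun s : Set.Icc (0:ℝ) T => f s ω) :=
      (isCompact_range hg).bddAbove
    have hB2 : BddAbove (Set.range fun n => f (D n) ω) := by
      refine hB.mono ?_
      rintro _ ⟨n, rfl⟩
      exact ⟨D n, rfl⟩
    apply le_antisymm
    · refine ciSup_le fun s => ?_
      have hclosed : IsClosed {t : Set.Icc (0:ℝ) T | f t ω ≤ ⨆ n, f (D n) ω} :=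
        isClosed_le hg continuous_const
      have hsub : Set.range D ⊆ {t : Set.Icc (0:ℝ) T | f t ω ≤ ⨆ n, f (D n) ω} := by
        rintro _ ⟨n, rfl⟩
        exact le_ciSup hB2 n
      have : s ∈ closure (Set.range D) := hdense s
      exact (closure_mono hsub).trans hclosed.closure_eq.le this
    · exact ciSup_le fun n => le_ciSup hB (D n)
  have : (fun ω => ⨆ s : Set.Icc (0:ℝ) T, f s ω) = fun ω => ⨆ n, f (D n) ω := funext key
  rw [this]
  exact Measurable.iSup fun n => hm (D n)

/-- Theorem 1 of the paper: pathwise-uniform convergence plus non-atomicity of the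
suprema at 0 implies convergence of exit probabilities from the non-positive orthant. -/
theorem puc_implies_P_conv {Ω : Type*} [MeasurableSpace Ω] {m : ℕ}
    (P : Measure Ω) [IsProbabilityMeasure P]
    (T : ℝ) (hT : 0 < T)
    (zN : ℕ → ℝ → Ω → EuclideanSpace ℝ (Fin m))
    (z : ℝ → Ω → EuclideanSpace ℝ (Fin m))
    (hmeasN : ∀ n s, Measurable fun ω => zN n s ω)
    (hmeas : ∀ s, Measurable fun ω => z s ω)
    (hcontN : ∀ n ω, Continuous fun s => zN n s ω)
    (hcont : ∀ ω, Continuous fun s => z s ω)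
    (ε : ℕ → ℝ) (hε : Filter.Tendsto ε Filter.atTop (nhds 0))
    (M : Ω → ℝ) (hM : ∀ ω, 0 < M ω)
    (hpuc : Filter.Tendsto
      (fun n => P {ω | ∃ s ∈ Set.Icc (0 : ℝ) T, ε n * M ω < ‖zN n s ω - z s ω‖})
      Filter.atTop (nhds 0))
    (hzero : ∀ j : Fin m, P {ω | (⨆ s : Set.Icc (0 : ℝ) T, z s ω j) = 0} = 0) :
    Filter.Tendsto
      (fun n => P {ω | ∃ s ∈ Set.Icc (0 : ℝ) T, ¬ ∀ j, zN n s ω j ≤ 0})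
      Filter.atTop
      (nhds (P {ω | ∃ s ∈ Set.Icc (0 : ℝ) T, ¬ ∀ j, z s ω j ≤ 0})) := by
  haveI : Nonempty (Set.Icc (0:ℝ) T) := ⟨⟨0, le_refl 0, hT.le⟩⟩
  have hTmem : (0:ℝ) ∈ Set.Icc (0:ℝ) T := ⟨le_refl 0, hT.le⟩
  -- the coordinate suprema and the uniform distances
  set S : Fin m → Ω → ℝ := fun j ω => ⨆ s : Set.Icc (0:ℝ) T, z s ω j with hSdef
  set r : ℕ → Ω → ℝ := fun n ω => ⨆ s : Set.Icc (0:ℝ) T, ‖zN n s ω - z s ω‖ with hrdef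
  set A : Set Ω := {ω | ∃ s ∈ Set.Icc (0 : ℝ) T, ¬ ∀ j, z s ω j ≤ 0} with hAdef
  set An : ℕ → Set Ω := fun n => {ω | ∃ s ∈ Set.Icc (0 : ℝ) T, ¬ ∀ j, zN n s ω j ≤ 0}
    with hAndef
  set bad : ℕ → Set Ω := fun n => {ω | ∃ s ∈ Set.Icc (0 : ℝ) T, ε n * M ω < ‖zN n s ω - z s ω‖}
    with hbaddef
  set C : ℕ → Set Ω := fun n => {ω | ∃ j, |S j ω| ≤ r n ω} with hCdef
  -- continuity/boundedness facts
  have hczj : ∀ ω (j : Fin m), Continuous fun s : ℝ => z s ω j := fun ω j =>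
    (EuclideanSpace.proj j).continuous.comp (hcont ω)
  have hcdn : ∀ n ω, Continuous fun s : ℝ => ‖zN n s ω - z s ω‖ := fun n ω =>
    ((hcontN n ω).sub (hcont ω)).norm
  have hBz : ∀ ω (j : Fin m), BddAbove (Set.range fun s : Set.Icc (0:ℝ) T => z s ω j) :=
    fun ω j => (isCompact_range ((hczj ω j).comp continuous_subtype_val)).bddAbove
  have hBr : ∀ n ω, BddAbove (Set.range fun s : Set.Icc (0:ℝ) T => ‖zN n s ω - z s ω‖) :=
    fun n ω => (isCompact_range ((hcdn n ω).comp continuous_subtype_val)).bddAbove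
  have hr0 : ∀ n ω, 0 ≤ r n ω := fun n ω =>
    le_trans (norm_nonneg _) (le_ciSup (hBr n ω) ⟨0, hTmem⟩)
  -- measurability
  have hSmeas : ∀ j, Measurable (S j) := fun j =>
    meas_sup_aux hT.le _ (fun ω => hczj ω j)
      (fun s => ((EuclideanSpace.proj j).continuous.measurable).comp (hmeas s))
  have hrmeas : ∀ n, Measurable (r n) := fun n =>
    meas_sup_aux hT.le _ (hcdn n)
      (fun s => ((hmeasN n s).sub (hmeas s)).norm)
  have hCmeas : ∀ n, MeasurableSet (C n) := by
    intro n
    have : C n = ⋃ j, {ω | |S j ω| ≤ r n ω} := by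
      ext ω; simp [hCdef]
    rw [this]
    exact MeasurableSet.iUnion fun j =>
      measurableSet_le ((hSmeas j).abs) (hrmeas n)
  -- characterization of A via S
  have hchar : ∀ ω, ω ∈ A ↔ ∃ j, 0 < S j ω := by
    intro ω
    constructor
    · rintro ⟨s, hs, h⟩
      push_neg at h
      obtain ⟨j, hj⟩ := h
      exact ⟨j, lt_of_lt_of_le hj (le_ciSup (hBz ω j) ⟨s, hs⟩)⟩
    · rintro ⟨j, hj⟩
      obtain ⟨s, hs⟩ := (lt_ciSup_iff (hBz ω j)).mp hj
      exact ⟨s, s.2, by push_neg; exact ⟨j, hs⟩⟩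
  -- coordinate bound
  have hcoord : ∀ n (s : ℝ) ω (j : Fin m), |zN n s ω j - z s ω j| ≤ ‖zN n s ω - z s ω‖ := by
    intro n s ω j
    have := coord_abs_le_norm (zN n s ω - z s ω) j
    rwa [PiLp.sub_apply] at this
  -- symmetric-difference containments
  have hsub1 : ∀ n, An n ⊆ A ∪ C n := by
    intro n ω hω
    by_cases hA : ω ∈ A
    · exact Or.inl hA
    · right
      obtain ⟨s, hs, h⟩ := hω
      push_neg at h
      obtain ⟨j, hj⟩ := h
      have hnA : ∀ t ∈ Set.Icc (0:ℝ) T, ∀ j' : Fin m, z t ω j' ≤ 0 := by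
        intro t ht j'
        by_contra hcon
        exact hA ⟨t, ht, by push_neg; exact ⟨j', lt_of_not_ge hcon⟩⟩
      have hSle : S j ω ≤ 0 := ciSup_le fun t => hnA t t.2 j
      have hdist : ‖zN n s ω - z s ω‖ ≤ r n ω := le_ciSup (hBr n ω) ⟨s, hs⟩
      have h1 : z s ω j ≥ zN n s ω j - ‖zN n s ω - z s ω‖ := by
        have := (abs_le.mp (hcoord n s ω j)).2
        linarith
      have h2 : -(r n ω) ≤ S j ω := by
        have h3 : -(r n ω) ≤ z s ω j := by linarith
        exact le_trans h3 (le_ciSup (hBz ω j) ⟨s, hs⟩)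
      exact ⟨j, abs_le.mpr ⟨by linarith, le_trans hSle (hr0 n ω)⟩⟩
  have hsub2 : ∀ n, A ⊆ An n ∪ C n := by
    intro n ω hω
    by_cases hAn : ω ∈ An n
    · exact Or.inl hAn
    · right
      obtain ⟨j, hj⟩ := (hchar ω).mp hω
      have hnAn : ∀ t ∈ Set.Icc (0:ℝ) T, ∀ j' : Fin m, zN n t ω j' ≤ 0 := by
        intro t ht j'
        by_contra hcon
        exact hAn ⟨t, ht, by push_neg; exact ⟨j', lt_of_not_ge hcon⟩⟩
      -- the supremum is attained
      obtain ⟨t, ht, hmax⟩ := isCompact_Icc.exists_isMaxOn (Set.nonempty_Icc.mpr hT.le)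
        ((hczj ω j).continuousOn : ContinuousOn (fun s : ℝ => z s ω j) (Set.Icc 0 T))
      have hSle : S j ω ≤ z t ω j := ciSup_le fun s => hmax s.2
      have hdist : ‖zN n t ω - z t ω‖ ≤ r n ω := le_ciSup (hBr n ω) ⟨t, ht⟩
      have h1 : z t ω j ≤ zN n t ω j + ‖zN n t ω - z t ω‖ := by
        have := (abs_le.mp (hcoord n t ω j)).1
        linarith
      have h2 : S j ω ≤ r n ω := by
        have := hnAn t ht j
        linarith
      exact ⟨j, abs_le.mpr ⟨by linarith [hj.le, hr0 n ω], h2⟩⟩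
  -- bounds on measures
  have hbound1 : ∀ n, P (An n) ≤ P A + P (C n) := fun n =>
    (measure_mono (hsub1 n)).trans (measure_union_le _ _)
  have hbound2 : ∀ n, P A ≤ P (An n) + P (C n) := fun n =>
    (measure_mono (hsub2 n)).trans (measure_union_le _ _)
  -- the key convergence: P (C n) → 0
  have hd : Tendsto (fun n => P (C n)) atTop (nhds 0) := by
    apply tendsto_of_subseq_tendsto
    intro ns hns
    have h2 : Tendsto (fun k => P (bad (ns k))) atTop (nhds 0) := hpuc.comp hns
    have hev : ∀ i : ℕ, ∀ᶠ k in atTop, P (bad (ns k)) < (2:ℝ≥0∞)⁻¹ ^ i := by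
      intro i
      exact h2.eventually_lt_const (ENNReal.pow_pos (by norm_num) i)
    obtain ⟨φ, hφmono, hφ⟩ := Filter.extraction_forall_of_eventually hev
    refine ⟨φ, ?_⟩
    set mk : ℕ → ℕ := fun i => ns (φ i) with hmk
    have htend : Tendsto mk atTop atTop := hns.comp hφmono.tendsto_atTop
    set U : ℕ → Set Ω := fun k => ⋃ i, ⋃ (_ : k ≤ i), C (mk i) with hU
    have hUmeas : ∀ k, MeasurableSet (U k) :=
      fun k => MeasurableSet.iUnion fun i => MeasurableSet.iUnion fun _ => hCmeas (mk i)
    have hUanti : Antitone U := by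
      intro k k' hkk'
      exact Set.iUnion₂_mono' fun i hi => ⟨i, le_trans hkk' hi, subset_rfl⟩
    have htmi : Tendsto (fun k => P (U k)) atTop (nhds (P (⋂ k, U k))) :=
      tendsto_measure_iInter_atTop (fun k => (hUmeas k).nullMeasurableSet) hUanti
        ⟨0, measure_ne_top P _⟩
    -- the intersection is null
    have hinter : P (⋂ k, U k) = 0 := by
      set Nset : Set Ω := ⋃ j, {ω | S j ω = 0} with hNset
      have hN : P Nset = 0 := measure_iUnion_null fun j => hzero j
      set L : Set Ω := ⋂ k, ⋃ i, ⋃ (_ : k ≤ i), bad (mk i) with hL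
      have hLnull : P L = 0 := by
        have hle : ∀ k, P L ≤ (2:ℝ≥0∞)⁻¹ ^ k * 2 := by
          intro k
          have hsubL : L ⊆ ⋃ i : ℕ, bad (mk (k + i)) := by
            intro ω hω
            have := Set.mem_iInter.mp hω k
            obtain ⟨i, hi⟩ := Set.mem_iUnion.mp this
            obtain ⟨hki, hmem⟩ := Set.mem_iUnion.mp hi
            exact Set.mem_iUnion.mpr ⟨i - k, by rwa [Nat.add_sub_cancel' hki]⟩
          calc P L ≤ ∑' i : ℕ, P (bad (mk (k + i))) :=
                le_trans (measure_mono hsubL) (measure_iUnion_le _)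
            _ ≤ ∑' i : ℕ, (2:ℝ≥0∞)⁻¹ ^ (k + i) :=
                ENNReal.tsum_le_tsum fun i => (hφ (k + i)).le
            _ = (2:ℝ≥0∞)⁻¹ ^ k * 2 := by
                simp only [pow_add, ENNReal.tsum_mul_left, ENNReal.tsum_geometric]
                rw [ENNReal.one_sub_inv_two]
                norm_num
        have htendL : Tendsto (fun k => (2:ℝ≥0∞)⁻¹ ^ k * 2) atTop (nhds 0) := by
          have := ENNReal.Tendsto.mul_const
            (ENNReal.tendsto_pow_atTop_nhds_zero_of_lt_one
              (r := (2:ℝ≥0∞)⁻¹) (by norm_num)) (b := (2:ℝ≥0∞)) (Or.inr (by norm_num))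
          simpa using this
        exact le_antisymm (ge_of_tendsto' htendL hle) zero_le
      have hcap : (⋂ k, U k) ⊆ Nset ∪ L := by
        intro ω hω
        by_contra hcon
        have hnN : ω ∉ Nset := fun h => hcon (Or.inl h)
        have hnL : ω ∉ L := fun h => hcon (Or.inr h)
        -- lower bound on |S j ω|
        have hSne : ∀ j : Fin m, S j ω ≠ 0 := by
          intro j hj
          exact hnN (Set.mem_iUnion.mpr ⟨j, hj⟩)
        obtain ⟨c, hc0, hcle⟩ : ∃ c > 0, ∀ j : Fin m, c ≤ |S j ω| := by
          rcases Nat.eq_zero_or_pos m with hm | hm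
          · exact ⟨1, one_pos, fun j => absurd (j.2.trans_eq hm) (Nat.not_lt_zero _)⟩
          · haveI : Nonempty (Fin m) := ⟨⟨0, hm⟩⟩
            obtain ⟨j0, _, hmin⟩ := Finset.exists_min_image Finset.univ
              (fun j : Fin m => |S j ω|) ⟨Classical.arbitrary (Fin m), Finset.mem_univ _⟩
            exact ⟨|S j0 ω|, abs_pos.mpr (hSne j0), fun j => hmin j (Finset.mem_univ j)⟩
        -- eventually not bad
        have hnotbad : ∃ k0, ∀ i ≥ k0, ω ∉ bad (mk i) := by
          by_contra hcon2
          push_neg at hcon2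
          apply hnL
          refine Set.mem_iInter.mpr fun k => ?_
          obtain ⟨i, hki, hbadmem⟩ := hcon2 k
          exact Set.mem_iUnion.mpr ⟨i, Set.mem_iUnion.mpr ⟨hki, hbadmem⟩⟩
        obtain ⟨k0, hk0⟩ := hnotbad
        have hrle : ∀ i ≥ k0, r (mk i) ω ≤ |ε (mk i)| * M ω := by
          intro i hi
          have hnb := hk0 i hi
          have : ∀ s ∈ Set.Icc (0:ℝ) T, ‖zN (mk i) s ω - z s ω‖ ≤ ε (mk i) * M ω := by
            intro s hs
            by_contra hcon3
            exact hnb ⟨s, hs, lt_of_not_ge hcon3⟩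
          refine le_trans (ciSup_le fun s => this s s.2) ?_
          have := le_abs_self (ε (mk i))
          nlinarith [hM ω]
        have hεt : Tendsto (fun i => |ε (mk i)| * M ω) atTop (nhds 0) := by
          have h1 : Tendsto (fun i => ε (mk i)) atTop (nhds 0) := hε.comp htend
          have h2 : Tendsto (fun i => |ε (mk i)|) atTop (nhds 0) := by
            simpa using h1.abs
          simpa using h2.mul_const (M ω)
        obtain ⟨K, hK⟩ := (hεt.eventually_lt_const hc0).exists_forall_of_atTop
        set k1 := max k0 K with hk1
        have hωU := Set.mem_iInter.mp hω k1
        obtain ⟨i, hi⟩ := Set.mem_iUnion.mp hωU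
        obtain ⟨hk1i, hmem⟩ := Set.mem_iUnion.mp hi
        obtain ⟨j, hj⟩ := hmem
        have hik0 : k0 ≤ i := le_trans (le_max_left _ _) hk1i
        have hiK : K ≤ i := le_trans (le_max_right _ _) hk1i
        have : |S j ω| ≤ |ε (mk i)| * M ω := le_trans hj (hrle i hik0)
        exact absurd (lt_of_le_of_lt (hcle j) (lt_of_le_of_lt this (hK i hiK)))
          (lt_irrefl _)
      refine le_antisymm ?_ zero_le
      calc P (⋂ k, U k) ≤ P (Nset ∪ L) := measure_mono hcap
        _ ≤ P Nset + P L := measure_union_le _ _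
        _ = 0 := by rw [hN, hLnull, add_zero]
    rw [hinter] at htmi
    have hCU : ∀ k, P (C (mk k)) ≤ P (U k) := fun k =>
      measure_mono (Set.subset_iUnion₂ (s := fun i _ => C (mk i)) k le_rfl)
    exact tendsto_of_tendsto_of_tendsto_of_le_of_le tendsto_const_nhds htmi
      (fun k => zero_le) hCU
  -- conclude by squeezing
  have hup : Tendsto (fun n => P A + P (C n)) atTop (nhds (P A)) := by
    have := (tendsto_const_nhds (x := P A)).add hd
    simpa using this
  have hlow : Tendsto (fun n => P A - P (C n)) atTop (nhds (P A)) := by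
    have := ENNReal.Tendsto.sub (tendsto_const_nhds (x := P A)) hd
      (Or.inl (measure_ne_top P A))
    simpa using this
  exact tendsto_of_tendsto_of_tendsto_of_le_of_le hlow hup
    (fun n => tsub_le_iff_right.mpr (hbound2 n)) hbound1
end

section
/- The first-passage function ψ(z, h, σ, Δt) = 1 − Φ((−hΔt − z)/(σ√Δt)) + exp(−2hz/σ²) Φ((−hΔt + z)/(σ√Δt)), where Φ is the standard normal CDF, takes values in [0,1] for all z ≤ 0, σ > 0, Δt > 0, and h ∈ ℝ. -/
open MeasureTheory ProbabilityTheory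

/-- The standard normal cumulative distribution function. -/
noncomputable def stdNormalCDF : ℝ → ℝ :=
  ProbabilityTheory.cdf (ProbabilityTheory.gaussianReal 0 1)

/-- The first-passage probability function `ψ` of the paper (Eq. 21). -/
noncomputable def psiFP (z h σ Δt : ℝ) : ℝ :=
  1 - stdNormalCDF ((-h * Δt - z) / (σ * Real.sqrt Δt)) +
    Real.exp (-(2 * h * z) / σ ^ 2) * stdNormalCDF ((-h * Δt + z) / (σ * Real.sqrt Δt))

lemma stdNormalCDF_eq_integral (x : ℝ) :
    stdNormalCDF x = ∫ t in Set.Iic x, gaussianPDFReal 0 1 t := by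
  rw [stdNormalCDF, cdf_eq_real, measureReal_def, gaussianReal_apply_eq_integral 0 one_ne_zero,
    ENNReal.toReal_ofReal]
  exact setIntegral_nonneg measurableSet_Iic fun t _ => gaussianPDFReal_nonneg 0 1 t

lemma stdNormalCDF_nonneg (x : ℝ) : 0 ≤ stdNormalCDF x := cdf_nonneg _ x

lemma stdNormalCDF_le_one (x : ℝ) : stdNormalCDF x ≤ 1 := cdf_le_one _ x

lemma key_ineq (a : ℝ) {β : ℝ} (hβ : 0 ≤ β) :
    Real.exp (2 * β * (β - a)) * stdNormalCDF (a - 2 * β) ≤ stdNormalCDF a := by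
  rw [stdNormalCDF_eq_integral, stdNormalCDF_eq_integral, ← integral_const_mul]
  -- change of variable in the left integral: t ↦ t - 2β
  have hmp : MeasurePreserving (fun t : ℝ => t - 2 * β) volume volume :=
    measurePreserving_sub_right volume (2 * β)
  have hemb : MeasurableEmbedding (fun t : ℝ => t - 2 * β) :=
    (MeasurableEquiv.subRight (2 * β)).measurableEmbedding
  have hpre : (fun t : ℝ => t - 2 * β) ⁻¹' Set.Iic (a - 2 * β) = Set.Iic a := by
    ext t; simp [sub_le_sub_iff_right]
  have hchg : (∫ t in Set.Iic (a - 2 * β),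
        Real.exp (2 * β * (β - a)) * gaussianPDFReal 0 1 t)
      = ∫ t in Set.Iic a,
        Real.exp (2 * β * (β - a)) * gaussianPDFReal 0 1 (t - 2 * β) := by
    rw [← hmp.setIntegral_preimage_emb hemb
      (fun t => Real.exp (2 * β * (β - a)) * gaussianPDFReal 0 1 t) _, hpre]
  rw [hchg]
  apply setIntegral_mono_on
  · refine Integrable.integrableOn ?_
    have : Integrable (fun t : ℝ => gaussianPDFReal 0 1 (t - 2 * β)) volume := by
      simpa using (integrable_gaussianPDFReal 0 1).comp_sub_right (2 * β)
    exact this.const_mul _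
  · exact (integrable_gaussianPDFReal 0 1).integrableOn
  · exact measurableSet_Iic
  · intro t ht
    simp only [Set.mem_Iic] at ht
    simp only [gaussianPDFReal, NNReal.coe_one, mul_one, sub_zero]
    rw [mul_comm, mul_assoc, ← Real.exp_add]
    gcongr
    nlinarith [mul_nonneg hβ (sub_nonneg.mpr ht)]

/-- `ψ(z, h, σ, Δt) ∈ [0, 1]` for `z ≤ 0`, `σ > 0`, `Δt > 0`, `h ∈ ℝ`. -/
theorem psiFP_mem_unit_interval (z h σ Δt : ℝ) (hz : z ≤ 0) (hσ : 0 < σ) (hΔt : 0 < Δt) :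
    0 ≤ psiFP z h σ Δt ∧ psiFP z h σ Δt ≤ 1 := by
  have hs : 0 < σ * Real.sqrt Δt := mul_pos hσ (Real.sqrt_pos.mpr hΔt)
  set a := (-h * Δt - z) / (σ * Real.sqrt Δt) with ha
  set b := (-h * Δt + z) / (σ * Real.sqrt Δt) with hb
  have hβ : 0 ≤ -z / (σ * Real.sqrt Δt) := div_nonneg (by linarith) hs.le
  have hkey := key_ineq a hβ
  have hsq : (σ * Real.sqrt Δt) ^ 2 = σ ^ 2 * Δt := by
    rw [mul_pow, Real.sq_sqrt hΔt.le]
  have h1 : a - 2 * (-z / (σ * Real.sqrt Δt)) = b := by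
    rw [ha, hb]; field_simp; ring
  have h2 : 2 * (-z / (σ * Real.sqrt Δt)) * (-z / (σ * Real.sqrt Δt) - a)
      = -(2 * h * z) / σ ^ 2 := by
    rw [ha]
    have h3 : Real.sqrt Δt ^ 2 = Δt := Real.sq_sqrt hΔt.le
    field_simp
    rw [h3]; ring
  rw [h1, h2] at hkey
  have hA0 := stdNormalCDF_nonneg a
  have hA1 := stdNormalCDF_le_one a
  have hB0 := stdNormalCDF_nonneg b
  have hE : 0 < Real.exp (-(2 * h * z) / σ ^ 2) := Real.exp_pos _
  constructor
  · unfold psiFP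
    rw [← ha, ← hb]
    nlinarith
  · unfold psiFP
    rw [← ha, ← hb]
    linarith
end
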